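/- arXiv:2009.12014 — 2 statements merged into one kernel-verified Lean document; each statement's English description precedes it below -/
import Mathlib

section
/- Let f be a form of degree d in n variables over k that is 2-regular, i.e., for every vector u ∈ k^n, if the polynomial uᵀ·H·u (where H is the Hessian matrix of f) is the zero polynomial, then u = 0. Then the center Z(f) contains no nonzero nilpotent matrix: if X ∈ Z(f) and X^m = 0 for some m ≥ 1, then X = 0. -/
open MvPolynomial Matrix

/-- The Hessian matrix of a multivariate polynomial. -/
noncomputable def hessian {k : Type*} [Field k] {σ : Type*} (f : MvPolynomial σ k) :
    Matrix σ σ (MvPolynomial σ k) :=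
  Matrix.of fun i j => pderiv i (pderiv j f)

/-- The center of a form `f`. -/
def center {k : Type*} [Field k] {σ : Type*} [Fintype σ] (f : MvPolynomial σ k) :
    Set (Matrix σ σ k) :=
  {X | (hessian f * X.map (C : k → MvPolynomial σ k))ᵀ
        = hessian f * X.map (C : k → MvPolynomial σ k)}

/-!
`X ∈ Z(f)` says exactly that `X` is self-adjoint for the symmetric bilinear form with Gram matrix
the Hessian `H`, so every power of `X` is self-adjoint as well. If `X ^ (m + 1) = 0` with
`m ≥ 1`, then `X ^ (2 * m) = 0`, hence `(X ^ m u)ᵀ H (X ^ m u) = uᵀ H X ^ (2 * m) u = 0` for every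
constant vector `u`; by 2-regularity `X ^ m u = 0`, i.e. `X ^ m = 0`. Descending on `m` gives
`X = 0`.
-/

theorem MvPolynomial.pderiv_pderiv_comm {R σ : Type*} [CommRing R] (i j : σ)
    (f : MvPolynomial σ R) : pderiv i (pderiv j f) = pderiv j (pderiv i f) := by
  classical
  -- the commutator of two derivations is a derivation, and this one kills every variable
  have hbracket : ⁅(pderiv i : Derivation R (MvPolynomial σ R) _), pderiv (R := R) j⁆ = 0 := by
    refine derivation_ext fun k => ?_
    rw [Derivation.commutator_apply]
    simp [pderiv_X, Pi.single_apply, apply_ite]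
  have := DFunLike.congr_fun hbracket f
  rwa [Derivation.commutator_apply, Derivation.zero_apply, sub_eq_zero] at this

theorem isSymm_hessian {k σ : Type*} [Field k] (f : MvPolynomial σ k) : (hessian f).IsSymm :=
  Matrix.ext fun i j => pderiv_pderiv_comm j i f

namespace Matrix

variable {ι R A : Type*} [Fintype ι]

theorem sum_sum_mul_mul_eq_dotProduct_mulVec [CommSemiring A] (M : Matrix ι ι A) (u : ι → A) :
    ∑ i, ∑ j, u i * u j * M i j = u ⬝ᵥ M *ᵥ u := by
  simp only [dotProduct, mulVec, Finset.mul_sum]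
  exact Finset.sum_congr rfl fun i _ => Finset.sum_congr rfl fun j _ => by ring

theorem IsSymm.isSelfAdjoint_iff [CommRing A] {J Y : Matrix ι ι A} (hJ : J.IsSymm) :
    Matrix.IsSelfAdjoint J Y ↔ (J * Y).IsSymm := by
  rw [Matrix.IsSelfAdjoint, IsAdjointPair, IsSymm, transpose_mul, hJ.eq, eq_comm]

theorem IsSelfAdjoint.pow [CommRing A] [DecidableEq ι] {J Y : Matrix ι ι A}
    (hY : Matrix.IsSelfAdjoint J Y) (t : ℕ) : Matrix.IsSelfAdjoint J (Y ^ t) := by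
  induction t with
  | zero => simp [Matrix.IsSelfAdjoint, IsAdjointPair]
  | succ t ih =>
    calc (Y ^ (t + 1))ᵀ * J = Yᵀ * ((Y ^ t)ᵀ * J) := by
          rw [pow_succ, transpose_mul, Matrix.mul_assoc]
      _ = J * Y ^ (t + 1) := by
          rw [ih, ← Matrix.mul_assoc, hY, Matrix.mul_assoc, pow_succ']

theorem IsAdjointPair.dotProduct_mulVec {κ : Type*} [Fintype κ] [CommRing A]
    {J : Matrix ι ι A} {J' : Matrix κ κ A} {Y : Matrix κ ι A} {Y' : Matrix ι κ A}
    (h : IsAdjointPair J J' Y Y') (v : ι → A) (w : κ → A) :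
    (Y *ᵥ v) ⬝ᵥ J' *ᵥ w = v ⬝ᵥ J *ᵥ Y' *ᵥ w := by
  rw [← vecMul_transpose, ← Matrix.dotProduct_mulVec, mulVec_mulVec, h, ← mulVec_mulVec]

section Nilpotent

variable [DecidableEq ι] [CommRing R] [CommRing A] (φ : R →+* A) {H : Matrix ι ι A}
  {X : Matrix ι ι R}

theorem pow_eq_zero_of_pow_succ_eq_zero_of_isSelfAdjoint_map
    (hreg : ∀ u : ι → R, (φ ∘ u) ⬝ᵥ H *ᵥ (φ ∘ u) = 0 → u = 0)
    (hX : Matrix.IsSelfAdjoint H (X.map φ)) {m : ℕ} (hm : m ≠ 0) (hXm : X ^ (m + 1) = 0) :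
    X ^ m = 0 := by
  have hX2m : X ^ (m + m) = 0 := pow_eq_zero_of_le (by omega) hXm
  rw [ext_iff_mulVec]
  intro v
  rw [zero_mulVec]
  refine hreg _ ?_
  have hmap : φ ∘ (X ^ m *ᵥ v) = X.map φ ^ m *ᵥ (φ ∘ v) := by
    funext i
    rw [Function.comp_apply, RingHom.map_mulVec, Matrix.map_pow]
  rw [hmap, (hX.pow m).dotProduct_mulVec, mulVec_mulVec, mulVec_mulVec, Matrix.mul_assoc,
    ← pow_add, ← Matrix.map_pow, hX2m]
  simp

theorem eq_zero_of_isNilpotent_of_isSelfAdjoint_map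
    (hreg : ∀ u : ι → R, (φ ∘ u) ⬝ᵥ H *ᵥ (φ ∘ u) = 0 → u = 0)
    (hX : Matrix.IsSelfAdjoint H (X.map φ)) (hnil : IsNilpotent X) : X = 0 := by
  obtain ⟨m, hXm⟩ := hnil
  induction m with
  | zero => simpa using congrArg (X * ·) hXm
  | succ m ih =>
    rcases m with _ | m
    · simpa using hXm
    · exact ih (pow_eq_zero_of_pow_succ_eq_zero_of_isSelfAdjoint_map φ hreg hX m.succ_ne_zero hXm)

end Nilpotent

end Matrix

theorem center_no_nilpotents_of_two_regular_general {k : Type*} [Field k] {n : ℕ}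
    (f : MvPolynomial (Fin n) k)
    (hreg : ∀ u : Fin n → k,
      (∑ i, ∑ j, C (u i) * C (u j) * hessian f i j) = 0 → u = 0) :
    ∀ X ∈ center f, ∀ m : ℕ, 1 ≤ m → X ^ m = 0 → X = 0 := by
  intro X hX m _ hXm
  have hquad : ∀ u : Fin n → k, (C ∘ u) ⬝ᵥ hessian f *ᵥ (C ∘ u) = 0 → u = 0 := fun u hu =>
    hreg u ((sum_sum_mul_mul_eq_dotProduct_mulVec _ (C ∘ u)).trans hu)
  exact eq_zero_of_isNilpotent_of_isSelfAdjoint_map C hquad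
    ((isSymm_hessian f).isSelfAdjoint_iff.mpr hX) ⟨m, hXm⟩

/-- if `f` is 2-regular (`uᵀ·H·u = 0` as a polynomial only for `u = 0`),
then the center of `f` contains no nonzero nilpotent matrix. -/
theorem center_no_nilpotents_of_two_regular {k : Type*} [Field k] {n d : ℕ} (hd : 3 ≤ d)
    (hchar : ringChar k = 0 ∨ d < ringChar k)
    (f : MvPolynomial (Fin n) k) (hf : f.IsHomogeneous d)
    (hreg : ∀ u : Fin n → k,
      (∑ i, ∑ j, C (u i) * C (u j) * hessian f i j) = 0 → u = 0) :
    ∀ X ∈ center f, ∀ m : ℕ, 1 ≤ m → X ^ m = 0 → X = 0 :=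
  center_no_nilpotents_of_two_regular_general f hreg
end

section
/- Let f be a form of degree d in n variables over k which is a limit of direct sums (LDS) form. Then the center Z(f) contains a nonzero nilpotent matrix (so Z(f) is not semisimple). -/
open MvPolynomial Matrix

/-- The form obtained from `f` by the linear change of variables `x ↦ P x`. -/
noncomputable def changeVar {k : Type*} [Field k] {σ : Type*} [Fintype σ]
    (P : Matrix σ σ k) (f : MvPolynomial σ k) : MvPolynomial σ k :=
  aeval (fun i => ∑ j, C (P i j) * X j) f

/-- The polynomial `Σ_{i=1}^l x_i · ∂h/∂x_{l+i}`. -/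
noncomputable def ldsSum {k : Type*} [Field k] {n : ℕ} (l : ℕ) (h2l : 2 * l ≤ n)
    (h : MvPolynomial (Fin n) k) : MvPolynomial (Fin n) k :=
  ∑ i : Fin n, if hi : (i : ℕ) < l then
      X i * pderiv (⟨l + (i : ℕ), by omega⟩ : Fin n) h
    else 0

/-- `f` is a limit of direct sums (LDS) form: after an invertible linear change of
variables, `f = Σ_{i=1}^l x_i·∂h/∂x_{l+i} + g` where `h` is a form of degree `d` in the
variables `x_{l+1},…,x_{2l}` and `g` is a form of degree `d` in `x_{l+1},…,x_n`. -/
def IsLDS {k : Type*} [Field k] {n : ℕ} (d : ℕ) (f : MvPolynomial (Fin n) k) : Prop :=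
  ∃ P : Matrix (Fin n) (Fin n) k, IsUnit P ∧
    ∃ (l : ℕ) (_ : 1 ≤ l) (h2l : 2 * l ≤ n), ∃ h g : MvPolynomial (Fin n) k,
      h.IsHomogeneous d ∧ (∀ i ∈ h.vars, l ≤ (i : ℕ) ∧ (i : ℕ) < 2 * l) ∧
      g.IsHomogeneous d ∧ (∀ i ∈ g.vars, l ≤ (i : ℕ)) ∧
      changeVar P f = ldsSum l h2l h + g

/-! After the change of variables, `F = Σᵢ xᵢ ∂h/∂x_{l+i} + g` has `∂F/∂xᵢ = ∂h/∂x_{l+i}` for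
`i < l`, so the shift matrix `N = Σ_{i<l} E_{i,l+i}` satisfies `H_F N = H_h`, which is symmetric:
`N ∈ Z(F)` and `N² = 0`. Since `H_{f(Px)} = Pᵀ H_f(Px) P`, the center of `f` is the conjugate of
that of `f(Px)`, so `P N P⁻¹` is a nonzero nilpotent element of `Z(f)`. -/

namespace MvPolynomial

variable {R σ τ : Type*} [CommSemiring R]

theorem pderiv_pderiv_comm_s8 (i j : σ) (p : MvPolynomial σ R) :
    pderiv i (pderiv j p) = pderiv j (pderiv i p) := by
  induction p using MvPolynomial.induction_on with
  | C a => simp only [pderiv_C, map_zero]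
  | add p q hp hq => simp only [map_add, hp, hq]
  | mul_X p s hp =>
    classical
    simp only [pderiv_mul, map_add, pderiv_X, hp]
    rcases eq_or_ne s i with rfl | hi <;> rcases eq_or_ne s j with rfl | hj <;> simp [*]

theorem pderiv_aeval [Fintype σ] (s : σ → MvPolynomial τ R) (a : τ) (p : MvPolynomial σ R) :
    pderiv a (aeval s p) = ∑ b, aeval s (pderiv b p) * pderiv a (s b) := by
  classical
  induction p using MvPolynomial.induction_on with
  | C r => simp
  | add p q hp hq => simp only [map_add, hp, hq, add_mul, Finset.sum_add_distrib]
  | mul_X p i hp =>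
    rw [map_mul, aeval_X, pderiv_mul, hp, Finset.sum_mul]
    simp only [pderiv_mul, map_add, map_mul, aeval_X, add_mul, Finset.sum_add_distrib, pderiv_X,
      Pi.single_apply]
    congr 1
    · exact Finset.sum_congr rfl fun b _ => mul_right_comm _ _ _
    · simp

end MvPolynomial

theorem Matrix.IsSymm.transpose_mul_mul {m n α : Type*} [Fintype n] [CommSemiring α]
    {B : Matrix n n α} (hB : B.IsSymm) (A : Matrix n m α) : (Aᵀ * B * A).IsSymm := by
  simp only [IsSymm, transpose_mul, transpose_transpose, hB.eq, Matrix.mul_assoc]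

section Hessian

variable {k σ : Type*} [Field k] [Fintype σ]

theorem mem_center_iff {f : MvPolynomial σ k} {M : Matrix σ σ k} :
    M ∈ center f ↔ (hessian f * M.map C).IsSymm :=
  Iff.rfl

theorem hessian_mul_map_C_apply (f : MvPolynomial σ k) (M : Matrix σ σ k) (a b : σ) :
    (hessian f * M.map (C : k → MvPolynomial σ k)) a b
      = pderiv a (∑ c, C (M c b) * pderiv c f) := by
  simp [hessian, mul_apply, mul_comm]

theorem pderiv_changeVar (P : Matrix σ σ k) (a : σ) (f : MvPolynomial σ k) :
    pderiv a (changeVar P f) = ∑ b, changeVar P (pderiv b f) * C (P b a) := by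
  classical
  rw [changeVar, pderiv_aeval]
  refine Finset.sum_congr rfl fun b _ => congrArg _ ?_
  simp [pderiv_X, Pi.single_apply]

theorem hessian_changeVar (P : Matrix σ σ k) (f : MvPolynomial σ k) :
    hessian (changeVar P f) = Pᵀ.map C * (hessian f).map (changeVar P) * P.map C := by
  ext i j : 1
  simp only [hessian, of_apply, mul_apply, map_apply, transpose_apply, pderiv_changeVar,
    map_sum, pderiv_mul, pderiv_C, mul_zero, add_zero, Finset.sum_mul]
  exact Finset.sum_congr rfl fun b _ => Finset.sum_congr rfl fun c _ => by ring

theorem changeVar_changeVar (P Q : Matrix σ σ k) (f : MvPolynomial σ k) :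
    changeVar Q (changeVar P f) = changeVar (P * Q) f := by
  simp only [changeVar, comp_aeval_apply]
  refine congrArg (fun s => aeval s f) (funext fun i => ?_)
  simp only [map_sum, map_mul, aeval_C, aeval_X, algebraMap_eq, mul_apply, Finset.mul_sum,
    Finset.sum_mul, mul_assoc]
  exact Finset.sum_comm

theorem changeVar_one [DecidableEq σ] (f : MvPolynomial σ k) : changeVar 1 f = f := by
  simp [changeVar, one_apply]

theorem map_changeVar_mul_map_C (P : Matrix σ σ k) (A : Matrix σ σ (MvPolynomial σ k))
    (M : Matrix σ σ k) : (A * M.map C).map (changeVar P) = A.map (changeVar P) * M.map C := by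
  ext i j
  simp [changeVar, mul_apply, algebraMap_eq]

theorem inv_mul_mul_mem_center_changeVar [DecidableEq σ] (u : (Matrix σ σ k)ˣ)
    {f : MvPolynomial σ k} {M : Matrix σ σ k} (hM : M ∈ center f) :
    ((u⁻¹ : (Matrix σ σ k)ˣ) : Matrix σ σ k) * M * u ∈ center (changeVar ↑u f) := by
  have hu : (u : Matrix σ σ k).map (C : k → MvPolynomial σ k) * (↑u⁻¹ : Matrix σ σ k).map C
      = 1 := by
    rw [← Matrix.map_mul, u.mul_inv, Matrix.map_one _ (map_zero C) (map_one C)]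
  have key : hessian (changeVar ↑u f) * (((u⁻¹ : (Matrix σ σ k)ˣ) : Matrix σ σ k) * M * u).map C
      = ((u : Matrix σ σ k).map C)ᵀ * (hessian f * M.map C).map (changeVar ↑u)
          * (u : Matrix σ σ k).map C := by
    rw [hessian_changeVar, map_changeVar_mul_map_C, transpose_map, Matrix.map_mul,
      Matrix.map_mul]
    simp only [Matrix.mul_assoc, ← Matrix.mul_assoc ((u : Matrix σ σ k).map C), hu,
      Matrix.one_mul]
  rw [mem_center_iff, key]
  exact (IsSymm.map hM _).transpose_mul_mul _

end Hessian

section LDS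

variable {k : Type*} [Field k] {n l : ℕ}

def ldsShift (l : ℕ) : Matrix (Fin n) (Fin n) k :=
  of fun i j => if (i : ℕ) < l ∧ (j : ℕ) = l + i then 1 else 0

theorem ldsShift_mul_self : (ldsShift l : Matrix (Fin n) (Fin n) k) * ldsShift l = 0 := by
  ext a b
  simp only [ldsShift, mul_apply, of_apply, Matrix.zero_apply, mul_ite, mul_one, mul_zero]
  refine Finset.sum_eq_zero fun c _ => ?_
  split_ifs <;> first | rfl | omega

theorem ldsShift_ne_zero (hl : 1 ≤ l) (h2l : 2 * l ≤ n) :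
    (ldsShift l : Matrix (Fin n) (Fin n) k) ≠ 0 := by
  intro h
  have := congrFun (congrFun h ⟨0, by omega⟩) ⟨l, by omega⟩
  simp [ldsShift] at this
  omega

variable (h2l : 2 * l ≤ n) {h g : MvPolynomial (Fin n) k}
  (hhv : ∀ i ∈ h.vars, l ≤ (i : ℕ) ∧ (i : ℕ) < 2 * l) (hgv : ∀ i ∈ g.vars, l ≤ (i : ℕ))
include hhv hgv

theorem pderiv_ldsSum_add {c : Fin n} (hc : (c : ℕ) < l) :
    pderiv c (ldsSum l h2l h + g) = pderiv ⟨l + c, by omega⟩ h := by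
  have hh : pderiv c h = 0 :=
    pderiv_eq_zero_of_notMem_vars fun hc' => by have := hhv c hc'; omega
  have hg : pderiv c g = 0 :=
    pderiv_eq_zero_of_notMem_vars fun hc' => by have := hgv c hc'; omega
  rw [map_add, hg, add_zero, ldsSum, map_sum, Finset.sum_eq_single c]
  · rw [dif_pos hc, pderiv_mul, pderiv_X_self, one_mul, pderiv_pderiv_comm_s8, hh, map_zero,
      mul_zero, add_zero]
  · intro i _ hic
    split_ifs
    · rw [pderiv_mul, pderiv_X_of_ne hic, pderiv_pderiv_comm_s8, hh, map_zero, zero_mul, mul_zero,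
        add_zero]
    · exact map_zero _
  · simp

theorem sum_C_ldsShift_mul_pderiv (b : Fin n) :
    ∑ c, C (ldsShift l c b) * pderiv c (ldsSum l h2l h + g) = pderiv b h := by
  by_cases hb : l ≤ (b : ℕ) ∧ (b : ℕ) < 2 * l
  · rw [Finset.sum_eq_single ⟨b - l, by omega⟩]
    · rw [ldsShift, of_apply, if_pos (by simp only; omega), C_1, one_mul,
        pderiv_ldsSum_add h2l hhv hgv (by simp only; omega)]
      exact congrArg (pderiv · h) (Fin.ext (by dsimp only; omega))
    · intro c _ hc
      rw [ldsShift, of_apply, if_neg, C_0, zero_mul]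
      rintro ⟨-, hcb⟩
      exact hc (Fin.ext (by simp only; omega))
    · simp
  · rw [pderiv_eq_zero_of_notMem_vars fun hb' => hb (hhv b hb')]
    refine Finset.sum_eq_zero fun c _ => ?_
    rw [ldsShift, of_apply, if_neg (by omega), C_0, zero_mul]

theorem hessian_ldsSum_add_mul_ldsShift :
    hessian (ldsSum l h2l h + g) * (ldsShift l).map C = hessian h := by
  ext a b : 1
  rw [hessian_mul_map_C_apply, sum_C_ldsShift_mul_pderiv h2l hhv hgv]
  rfl

theorem ldsShift_mem_center : ldsShift l ∈ center (ldsSum l h2l h + g) := by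
  rw [mem_center_iff, hessian_ldsSum_add_mul_ldsShift h2l hhv hgv]
  exact isSymm_hessian h

end LDS

theorem center_has_nilpotent_of_LDS_general {k : Type*} [Field k] {n d : ℕ}
    (f : MvPolynomial (Fin n) k) (hlds : IsLDS d f) :
    ∃ N ∈ center f, N ≠ 0 ∧ IsNilpotent N := by
  obtain ⟨_, ⟨u, rfl⟩, l, hl, h2l, h, g, -, hhv, -, hgv, hf⟩ := hlds
  have hmem := inv_mul_mul_mem_center_changeVar u⁻¹ (ldsShift_mem_center h2l hhv hgv)
  rw [← hf, changeVar_changeVar, Units.mul_inv, changeVar_one, inv_inv] at hmem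
  refine ⟨_, hmem, ?_, 2, ?_⟩
  · rw [Ne, Units.mul_left_eq_zero, Units.mul_right_eq_zero]
    exact ldsShift_ne_zero hl h2l
  · rw [Units.conj_pow, sq, ldsShift_mul_self, mul_zero, zero_mul]

/-- the center of an LDS form contains a nonzero nilpotent matrix. -/
theorem center_has_nilpotent_of_LDS {k : Type*} [Field k] {n d : ℕ} (hd : 3 ≤ d)
    (hchar : ringChar k = 0 ∨ d < ringChar k)
    (f : MvPolynomial (Fin n) k) (hf : f.IsHomogeneous d) (hlds : IsLDS d f) :
    ∃ N ∈ center f, N ≠ 0 ∧ IsNilpotent N :=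
  center_has_nilpotent_of_LDS_general f hlds
end
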